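/- arXiv:2102.02954 — 2 statements merged into one kernel-verified Lean document; each statement's English description precedes it below -/
import Mathlib

section
/- For θ > 3 and k, k' real, 2 ∑_{x≥1} [cos(2πkx) + cos(2πk'x) - cos(2π(k+k')x) - 1]/x^θ = 2(2π)² C₁(θ) k k' + o(|kk'|) as (k,k') → (0,0), where C₁(θ) = ∑_{x≥1} x^{2-θ}. -/
/-!
By the product-to-sum identity
`cos u + cos v - cos (u + v) - 1 = sin u sin v - (1 - cos u)(1 - cos v)`, this quantity
differs from `u v` by at most `3 |u v|`, and by at most `|u v| (u² + v²)` (second-order Taylor).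
With `u = 2π k x`, `v = 2π k' x`, each term of the series minus its leading part
`(2π)² k k' x^(2-θ)` is therefore `o(|k k'|)` and bounded by `3 (2π)² x^(2-θ) |k k'|`, which is
summable for `θ > 3`; a series of little-o terms with a summable dominating bound is little-o.
-/

open Real Filter Asymptotics Topology

theorem Asymptotics.isLittleO_tsum {α ι E F : Type*} [NormedAddCommGroup E] [CompleteSpace E]
    [SeminormedAddCommGroup F] {l : Filter α} {f : ι → α → E} {g : α → F} {bound : ι → ℝ}
    (h_sum : Summable bound) (hf : ∀ n, f n =o[l] g) (h_bound : ∀ n x, ‖f n x‖ ≤ bound n * ‖g x‖) :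
    (fun x => ∑' n, f n x) =o[l] g := by
  refine IsLittleO.of_bound fun ε hε => ?_
  obtain ⟨s, hs⟩ : ∃ s : Finset ι, ∑' n : {n // n ∉ s}, bound n < ε / 2 :=
    ((tendsto_order.1 (tendsto_tsum_compl_atTop_zero bound)).2 _ (half_pos hε)).exists
  filter_upwards [(IsLittleO.fun_sum fun n _ => hf n).bound (half_pos hε)] with x hx
  have hfx : Summable (f · x) := .of_norm_bounded (h_sum.mul_right ‖g x‖) (h_bound · x)
  have htail : ‖∑' n : {n // n ∉ s}, f n x‖ ≤ (∑' n : {n // n ∉ s}, bound n) * ‖g x‖ :=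
    tsum_of_norm_bounded ((h_sum.subtype _).hasSum.mul_right ‖g x‖) fun n => h_bound n x
  rw [← hfx.sum_add_tsum_subtype_compl s]
  calc ‖∑ n ∈ s, f n x + ∑' n : {n // n ∉ s}, f n x‖
      ≤ ε / 2 * ‖g x‖ + (∑' n : {n // n ∉ s}, bound n) * ‖g x‖ :=
        (norm_add_le _ _).trans (add_le_add hx htail)
    _ ≤ ε * ‖g x‖ := by nlinarith [norm_nonneg (g x)]

lemma abs_sin_sub_self_le (x : ℝ) : |sin x - x| ≤ |x| ^ 3 / 6 := by
  wlog hx : 0 ≤ x generalizing x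
  · rw [abs_sub_comm]
    simpa [sin_neg, neg_add_eq_sub] using this (-x) (by linarith)
  rw [abs_of_nonpos (by linarith [sin_le hx]), abs_of_nonneg hx]
  linarith [sin_ge_sub_cube hx]

lemma one_sub_cos_le_abs (x : ℝ) : 1 - cos x ≤ |x| := by
  rcases le_or_gt |x| 2 with h | h
  · nlinarith [one_sub_sq_div_two_le_cos (x := x), sq_abs x, abs_nonneg x]
  · linarith [neg_one_le_cos x]

lemma cos_add_cos_sub_cos_add_sub_one (u v : ℝ) :
    cos u + cos v - cos (u + v) - 1 = sin u * sin v - (1 - cos u) * (1 - cos v) := by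
  rw [cos_add]; ring

lemma abs_cos_add_cos_sub_cos_add_sub_one_le (u v : ℝ) :
    |cos u + cos v - cos (u + v) - 1| ≤ 2 * |u * v| := by
  have hsin : |sin u * sin v| ≤ |u * v| := by
    rw [abs_mul, abs_mul]
    exact mul_le_mul abs_sin_le_abs abs_sin_le_abs (abs_nonneg _) (abs_nonneg _)
  have hcos : |(1 - cos u) * (1 - cos v)| ≤ |u * v| := by
    have hu : 0 ≤ 1 - cos u := sub_nonneg.2 (cos_le_one u)
    rw [abs_of_nonneg (mul_nonneg hu (sub_nonneg.2 (cos_le_one v))), abs_mul]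
    exact mul_le_mul (one_sub_cos_le_abs u) (one_sub_cos_le_abs v) (by linarith [cos_le_one v])
      (abs_nonneg u)
  rw [cos_add_cos_sub_cos_add_sub_one]
  linarith [abs_sub (sin u * sin v) ((1 - cos u) * (1 - cos v))]

lemma abs_cos_add_cos_sub_cos_add_sub_one_sub_mul_le (u v : ℝ) :
    |cos u + cos v - cos (u + v) - 1 - u * v| ≤ |u * v| * (u ^ 2 + v ^ 2) := by
  have hsin : |sin u * (sin v - v) + v * (sin u - u)|
      ≤ |u| * (|v| ^ 3 / 6) + |v| * (|u| ^ 3 / 6) := by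
    refine (abs_add_le _ _).trans ?_
    rw [abs_mul, abs_mul]
    exact add_le_add
      (mul_le_mul abs_sin_le_abs (abs_sin_sub_self_le v) (abs_nonneg _) (abs_nonneg u))
      (mul_le_mul_of_nonneg_left (abs_sin_sub_self_le u) (abs_nonneg v))
  have hcos : |(1 - cos u) * (1 - cos v)| ≤ u ^ 2 / 2 * (v ^ 2 / 2) := by
    have hu : 0 ≤ 1 - cos u := sub_nonneg.2 (cos_le_one u)
    rw [abs_of_nonneg (mul_nonneg hu (sub_nonneg.2 (cos_le_one v)))]
    exact mul_le_mul (by linarith [one_sub_sq_div_two_le_cos (x := u)])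
      (by linarith [one_sub_sq_div_two_le_cos (x := v)]) (by linarith [cos_le_one v])
      (by positivity)
  have hsplit : cos u + cos v - cos (u + v) - 1 - u * v
      = (sin u * (sin v - v) + v * (sin u - u)) - (1 - cos u) * (1 - cos v) := by
    rw [cos_add_cos_sub_cos_add_sub_one]; ring
  rw [hsplit, abs_mul, ← sq_abs u, ← sq_abs v]
  have := abs_sub (sin u * (sin v - v) + v * (sin u - u)) ((1 - cos u) * (1 - cos v))
  rw [← sq_abs u, ← sq_abs v] at hcos
  nlinarith [abs_nonneg u, abs_nonneg v, mul_nonneg (abs_nonneg u) (abs_nonneg v),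
    mul_nonneg (mul_nonneg (abs_nonneg u) (abs_nonneg v)) (sq_nonneg (|u| - |v|))]

lemma abs_cos_add_cos_sub_cos_add_sub_one_sub_mul_le_three_mul (u v : ℝ) :
    |cos u + cos v - cos (u + v) - 1 - u * v| ≤ 3 * |u * v| := by
  linarith [abs_sub (cos u + cos v - cos (u + v) - 1) (u * v),
    abs_cos_add_cos_sub_cos_add_sub_one_le u v]

theorem isLittleO_tsum_cos_add_cos_sub_cos_add_sub_one {ι : Type*} {a w : ι → ℝ}
    (hw : ∀ n, 0 ≤ w n) (hs : Summable fun n => a n ^ 2 * w n) :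
    (fun p : ℝ × ℝ =>
        ∑' n, (cos (a n * p.1) + cos (a n * p.2) - cos (a n * (p.1 + p.2)) - 1) * w n
          - (∑' n, a n ^ 2 * w n) * p.1 * p.2) =o[𝓝 (0, 0)] fun p => p.1 * p.2 := by
  set r : ι → ℝ × ℝ → ℝ := fun n p =>
    (cos (a n * p.1) + cos (a n * p.2) - cos (a n * (p.1 + p.2)) - 1 - a n * p.1 * (a n * p.2))
      * w n with hr
  have hr_norm : ∀ n p, ‖r n p‖ = |cos (a n * p.1) + cos (a n * p.2)
      - cos (a n * p.1 + a n * p.2) - 1 - a n * p.1 * (a n * p.2)| * w n := fun n p => by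
    rw [Real.norm_eq_abs, hr, abs_mul, abs_of_nonneg (hw n), mul_add]
  have hmul : ∀ n (p : ℝ × ℝ), |a n * p.1 * (a n * p.2)| = a n ^ 2 * |p.1 * p.2| := fun n p => by
    rw [show a n * p.1 * (a n * p.2) = a n ^ 2 * (p.1 * p.2) by ring, abs_mul,
      abs_of_nonneg (sq_nonneg _)]
  have hr_le : ∀ n p, ‖r n p‖ ≤ 3 * (a n ^ 2 * w n) * ‖p.1 * p.2‖ := fun n p => by
    calc ‖r n p‖ ≤ 3 * |a n * p.1 * (a n * p.2)| * w n := by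
          rw [hr_norm]
          gcongr
          exacts [hw n, abs_cos_add_cos_sub_cos_add_sub_one_sub_mul_le_three_mul _ _]
      _ = _ := by rw [hmul, Real.norm_eq_abs]; ring
  have hr_small : ∀ n, r n =o[𝓝 (0, 0)] fun p => p.1 * p.2 := fun n => by
    have hO : r n =O[𝓝 (0, 0)] fun p => (p.1 ^ 2 + p.2 ^ 2) * (p.1 * p.2) := by
      refine IsBigO.of_bound (a n ^ 4 * w n) (Eventually.of_forall fun p => ?_)
      calc ‖r n p‖ ≤ |a n * p.1 * (a n * p.2)| * ((a n * p.1) ^ 2 + (a n * p.2) ^ 2) * w n := by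
            rw [hr_norm]
            gcongr
            exacts [hw n, abs_cos_add_cos_sub_cos_add_sub_one_sub_mul_le _ _]
        _ = _ := by
          rw [hmul, norm_mul, Real.norm_eq_abs, Real.norm_eq_abs,
            abs_of_nonneg (by positivity : (0 : ℝ) ≤ p.1 ^ 2 + p.2 ^ 2)]
          ring
    have hsq : (fun p : ℝ × ℝ => p.1 ^ 2 + p.2 ^ 2) =o[𝓝 (0, 0)] fun _ => (1 : ℝ) :=
      (isLittleO_one_iff ℝ).2 (by
        simpa using (by fun_prop : Continuous fun p : ℝ × ℝ => p.1 ^ 2 + p.2 ^ 2).tendsto (0, 0))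
    simpa using hO.trans_isLittleO (hsq.mul_isBigO (isBigO_refl (fun p : ℝ × ℝ => p.1 * p.2) _))
  refine (isLittleO_tsum (hs.mul_left 3) hr_small hr_le).congr_left fun p => ?_
  have hr_summable : Summable (r · p) :=
    .of_norm_bounded ((hs.mul_left 3).mul_right ‖p.1 * p.2‖) (hr_le · p)
  have hsplit := hr_summable.tsum_add (hs.mul_right (p.1 * p.2))
  rw [tsum_mul_right] at hsplit
  rw [mul_assoc (∑' n, a n ^ 2 * w n), eq_sub_iff_add_eq, ← hsplit]
  exact tsum_congr fun n => by rw [hr]; ring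

/-- For θ > 3 and k, k' real,
2 ∑_{x≥1} [cos(2πkx) + cos(2πk'x) - cos(2π(k+k')x) - 1]/x^θ
  = 2(2π)² C₁(θ) k k' + o(|kk'|) as (k,k') → (0,0), where C₁(θ) = ∑_{x≥1} x^{2-θ}. -/
theorem stmt9 (θ : ℝ) (hθ : 3 < θ) :
    (fun p : ℝ × ℝ =>
        2 * (∑' x : ℕ,
            (Real.cos (2 * π * p.1 * (x + 1)) + Real.cos (2 * π * p.2 * (x + 1))
              - Real.cos (2 * π * (p.1 + p.2) * (x + 1)) - 1) / ((x : ℝ) + 1) ^ θ)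
          - 2 * (2 * π) ^ 2 * (∑' x : ℕ, ((x : ℝ) + 1) ^ (2 - θ)) * p.1 * p.2)
      =o[nhds (0, 0)] (fun p : ℝ × ℝ => |p.1 * p.2|) := by
  have hweight : ∀ x : ℕ, (2 * π * ((x : ℝ) + 1)) ^ 2 * (((x : ℝ) + 1) ^ θ)⁻¹
      = (2 * π) ^ 2 * ((x : ℝ) + 1) ^ (2 - θ) := fun x => by
    rw [rpow_sub (by positivity), rpow_two]; ring
  have hsummable : Summable fun x : ℕ => ((x : ℝ) + 1) ^ (2 - θ) := by
    simpa using (summable_nat_add_iff 1).2 (Real.summable_nat_rpow.2 (by linarith : 2 - θ < -1))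
  have h := isLittleO_tsum_cos_add_cos_sub_cos_add_sub_one
    (a := fun x : ℕ => 2 * π * ((x : ℝ) + 1)) (fun x => inv_nonneg.2 (by positivity))
    ((hsummable.mul_left ((2 * π) ^ 2)).congr fun x => (hweight x).symm)
  refine isLittleO_abs_right.2 ((h.const_mul_left 2).congr_left fun p => ?_)
  have hterm : ∀ x : ℕ, (cos (2 * π * p.1 * (x + 1)) + cos (2 * π * p.2 * (x + 1))
      - cos (2 * π * (p.1 + p.2) * (x + 1)) - 1) / ((x : ℝ) + 1) ^ θ
      = (cos (2 * π * (x + 1) * p.1) + cos (2 * π * (x + 1) * p.2)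
        - cos (2 * π * (x + 1) * (p.1 + p.2)) - 1) * (((x : ℝ) + 1) ^ θ)⁻¹ := fun x => by
    rw [div_eq_mul_inv]; ring_nf
  simp only [hweight, tsum_mul_left, tsum_congr hterm]
  ring
end

section
/- For any real a, b with b ≤ 0, every eigenvalue of the 2×2 complex matrix M = [[ia + b, b], [b, -ia + b]] has nonpositive real part, and consequently sup_{t ≥ 0} ‖exp(tM)‖ < ∞. -/
/-!
Writing `v = (v₀, v₁)`, one computes `Re ⟪M v, v⟫ = b |v₀ + v₁|²`: the part
`i a · diag(1, -1)` of `M` is skew-Hermitian and contributes nothing, and the rest is `b` times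
the all-ones matrix. So `M` is dissipative when `b ≤ 0`. An eigenvector `v` for `μ` then gives
`Re μ ‖v‖² = Re ⟪M v, v⟫ ≤ 0`, and along `u t = exp (t M) x` the derivative of `‖u t‖²` is
`2 Re ⟪M u t, u t⟫ ≤ 0`, so `exp (t M)` is a contraction for `t ≥ 0`.
-/

open Complex Matrix
open scoped InnerProductSpace

namespace ContinuousLinearMap

variable {𝕜 E : Type*} [RCLike 𝕜] [NormedAddCommGroup E] [InnerProductSpace 𝕜 E]

def IsDissipative (A : E →L[𝕜] E) : Prop :=
  ∀ x, RCLike.re ⟪A x, x⟫_𝕜 ≤ 0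

namespace IsDissipative

variable {A : E →L[𝕜] E}

theorem re_le_zero_of_apply_eq_smul (hA : A.IsDissipative) {μ : 𝕜} {v : E} (hv : v ≠ 0)
    (hAv : A v = μ • v) : RCLike.re μ ≤ 0 := by
  have h := hA v
  rw [hAv, inner_smul_left, inner_self_eq_norm_sq_to_K, ← RCLike.ofReal_pow, RCLike.re_mul_ofReal,
    RCLike.conj_re] at h
  exact nonpos_of_mul_nonpos_left h (by positivity)

theorem re_le_zero_of_mem_spectrum [FiniteDimensional 𝕜 E] (hA : A.IsDissipative) {μ : 𝕜}
    (hμ : μ ∈ spectrum 𝕜 A) : RCLike.re μ ≤ 0 := by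
  have := FiniteDimensional.complete 𝕜 E
  rw [spectrum_eq, ← Module.End.hasEigenvalue_iff_mem_spectrum] at hμ
  obtain ⟨v, hv⟩ := hμ.exists_hasEigenvector
  exact hA.re_le_zero_of_apply_eq_smul hv.2 hv.apply_eq_smul

end IsDissipative

section Complex

variable {E : Type*} [NormedAddCommGroup E] [InnerProductSpace ℂ E] [CompleteSpace E]
  {A : E →L[ℂ] E}

theorem IsDissipative.norm_exp_smul_apply_le (hA : A.IsDissipative) {t : ℝ} (ht : 0 ≤ t)
    (x : E) : ‖NormedSpace.exp (t • A) x‖ ≤ ‖x‖ := by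
  set u : ℝ → E := fun s => NormedSpace.exp (s • A) x
  have hu : ∀ s, HasDerivAt u (A (u s)) s := fun s =>
    ((apply ℂ E x).restrictScalars ℝ).hasFDerivAt.comp_hasDerivAt s
      (hasDerivAt_exp_smul_const' (𝕂 := ℝ) A s)
  have hnorm_sq :
      ∀ s, HasDerivAt (fun s => ‖u s‖ ^ 2) (2 * RCLike.re ⟪A (u s), u s⟫_ℂ) s := by
    intro s
    have h := RCLike.reCLM.hasFDerivAt.comp_hasDerivAt s ((hu s).inner ℂ (hu s))
    simp only [Function.comp_def, RCLike.reCLM_apply, inner_self_eq_norm_sq, map_add,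
      inner_re_symm (u s)] at h
    rwa [← two_mul] at h
  have hanti : Antitone fun s => ‖u s‖ ^ 2 :=
    antitone_of_deriv_nonpos (fun s => (hnorm_sq s).differentiableAt) fun s => by
      rw [(hnorm_sq s).deriv]
      linarith [hA (u s)]
  have hu₀ : u 0 = x := by simp [u]
  have h : ‖u t‖ ^ 2 ≤ ‖u 0‖ ^ 2 := hanti ht
  rw [hu₀] at h
  exact (pow_le_pow_iff_left₀ (norm_nonneg _) (norm_nonneg _) two_ne_zero).mp h

theorem IsDissipative.norm_exp_smul_le_one (hA : A.IsDissipative) {t : ℝ} (ht : 0 ≤ t) :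
    ‖NormedSpace.exp (t • A)‖ ≤ 1 :=
  opNorm_le_bound _ zero_le_one fun x => by simpa using hA.norm_exp_smul_apply_le ht x

end Complex

end ContinuousLinearMap

theorem Matrix.isDissipative_toEuclideanCLM_iff {𝕜 n : Type*} [RCLike 𝕜] [Fintype n]
    [DecidableEq n] {M : Matrix n n 𝕜} :
    (toEuclideanCLM (𝕜 := 𝕜) M).IsDissipative ↔
      ∀ v : n → 𝕜, RCLike.re (star v ⬝ᵥ M *ᵥ v) ≤ 0 := by
  simp only [ContinuousLinearMap.IsDissipative, EuclideanSpace.inner_eq_star_dotProduct,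
    ofLp_toEuclideanCLM, dotProduct_star, dotProduct_comm (M *ᵥ _), RCLike.star_def,
    RCLike.conj_re]
  exact ((WithLp.ofLp_surjective 2).forall
    (p := fun v => RCLike.re (star v ⬝ᵥ M *ᵥ v) ≤ 0)).symm

theorem re_star_dotProduct_mulVec (a b : ℝ) (v : Fin 2 → ℂ) :
    (star v ⬝ᵥ !![(a : ℂ) * I + b, (b : ℂ); (b : ℂ), -(a : ℂ) * I + b] *ᵥ v).re =
      b * normSq (v 0 + v 1) := by
  simp [dotProduct, mulVec, Fin.sum_univ_two, normSq_apply]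
  ring

theorem isDissipative_toEuclideanCLM_of_nonpos (a : ℝ) {b : ℝ} (hb : b ≤ 0) :
    (toEuclideanCLM (𝕜 := ℂ)
      !![(a : ℂ) * I + b, (b : ℂ); (b : ℂ), -(a : ℂ) * I + b]).IsDissipative :=
  isDissipative_toEuclideanCLM_iff.mpr fun v => (re_star_dotProduct_mulVec a b v).trans_le <|
    mul_nonpos_of_nonpos_of_nonneg hb (normSq_nonneg _)

/-- For real a, b with b ≤ 0, every eigenvalue of M = [[ia + b, b], [b, -ia + b]] has
nonpositive real part, and consequently sup_{t ≥ 0} ‖exp(tM)‖ < ∞ (as operators on ℂ²). -/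
theorem stmt10 (a b : ℝ) (hb : b ≤ 0)
    (M : Matrix (Fin 2) (Fin 2) ℂ)
    (hM : M = !![(a : ℂ) * Complex.I + b, (b : ℂ); (b : ℂ), -(a : ℂ) * Complex.I + b]) :
    (∀ μ ∈ spectrum ℂ M, μ.re ≤ 0) ∧
    ∃ C : ℝ, ∀ t : ℝ, 0 ≤ t →
      ‖NormedSpace.exp (t • (Matrix.toEuclideanCLM (𝕜 := ℂ) M))‖ ≤ C := by
  subst hM
  have hA := isDissipative_toEuclideanCLM_of_nonpos a hb
  refine ⟨fun μ hμ => hA.re_le_zero_of_mem_spectrum ?_, 1,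
    fun t ht => hA.norm_exp_smul_le_one ht⟩
  rwa [AlgEquiv.spectrum_eq]
end
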